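/- arXiv:0709.3515 — 6 statements merged into one kernel-verified Lean document; each statement's English description precedes it below -/
import Mathlib

section
/- For all y₁ ∈ (0, √2), the inequality arctan(√2/4) + 2·arctan(y₁/2) > arctan((√2 + y₁)/4) holds. -/
open Real

theorem arctan_angle_ineq (y₁ : ℝ) (hy : y₁ ∈ Set.Ioo 0 (Real.sqrt 2)) :
    Real.arctan (Real.sqrt 2 / 4) + 2 * Real.arctan (y₁ / 2)
      > Real.arctan ((Real.sqrt 2 + y₁) / 4) := by
  obtain ⟨hy0, hy2⟩ := hy
  have hs2 : (0:ℝ) < Real.sqrt 2 := by positivity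
  have hs2sq : Real.sqrt 2 * Real.sqrt 2 = 2 := Real.mul_self_sqrt (by norm_num)
  set a : ℝ := Real.sqrt 2 / 4
  set b : ℝ := y₁ / 4
  have hb0 : 0 < b := by positivity
  have hab : a * b < 1 := by
    have : Real.sqrt 2 * y₁ < 2 := by
      calc Real.sqrt 2 * y₁ < Real.sqrt 2 * Real.sqrt 2 := by
            exact mul_lt_mul_of_pos_left hy2 hs2
        _ = 2 := hs2sq
    simp only [a, b]
    nlinarith
  have hadd := Real.arctan_add hab
  have h1 : Real.arctan ((Real.sqrt 2 + y₁) / 4) ≤ Real.arctan a + Real.arctan b := by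
    rw [hadd]
    apply Real.arctan_strictMono.le_iff_le.2
    have hden : 0 < 1 - a * b := by linarith
    rw [div_le_div_iff₀ (by norm_num) hden]
    have hab0 : 0 < a * b := by positivity
    simp only [a, b] at hab0 ⊢
    nlinarith [hs2sq, sq_nonneg y₁]
  have h2 : Real.arctan b < 2 * Real.arctan (y₁ / 2) := by
    have hlt : Real.arctan b < Real.arctan (y₁ / 2) :=
      Real.arctan_strictMono (by simp only [b]; linarith)
    have hpos : 0 < Real.arctan (y₁ / 2) := by rw [← Real.arctan_zero]; exact Real.arctan_strictMono (by linarith)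
    linarith
  linarith
end

section
/- Let y₃ ∈ (0, √2) and m > 0, and define y₂(m) = -2m + √(4m² + 4m·y₃ - y₃² + 4). Then the expression under the square root is positive and dy₂/dm < 0, i.e., y₂ is strictly decreasing in m. -/
open Real Set

/-- The height y₂(m) = -2m + √(4m² + 4m·y₃ - y₃² + 4) of the second reflection:
the radicand is positive for m > 0 and y₂ is strictly decreasing in m on (0, ∞). -/
theorem second_reflection_height_decreasing
    (y₃ : ℝ) (hy : y₃ ∈ Set.Ioo 0 (Real.sqrt 2)) :
    (∀ m : ℝ, 0 < m → 0 < 4*m^2 + 4*m*y₃ - y₃^2 + 4)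
    ∧ StrictAntiOn (fun m : ℝ => -2*m + Real.sqrt (4*m^2 + 4*m*y₃ - y₃^2 + 4))
        (Set.Ioi 0) := by
  obtain ⟨hy0, hy2⟩ := hy
  have hsq : y₃ ^ 2 < 2 := by
    have h2 : Real.sqrt 2 ^ 2 = 2 := Real.sq_sqrt (by norm_num)
    nlinarith [Real.sqrt_nonneg 2]
  have hpos : ∀ m : ℝ, 0 < m → 0 < 4*m^2 + 4*m*y₃ - y₃^2 + 4 := by
    intro m hm; nlinarith
  refine ⟨hpos, ?_⟩
  have key : ∀ m : ℝ, 0 < m →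
      2*m + y₃ < Real.sqrt (4*m^2 + 4*m*y₃ - y₃^2 + 4) := by
    intro m hm
    rw [show (2*m + y₃ : ℝ) = Real.sqrt ((2*m + y₃)^2) from
      (Real.sqrt_sq (by positivity)).symm]
    apply Real.sqrt_lt_sqrt (by positivity)
    nlinarith
  intro a ha b hb hab
  simp only [Set.mem_Ioi] at ha hb
  have hRa := hpos a ha
  have hRb := hpos b hb
  have ka := key a ha
  have sa := Real.sq_sqrt hRa.le
  have na := Real.sqrt_nonneg (4*a^2 + 4*a*y₃ - y₃^2 + 4)
  have hlt : Real.sqrt (4*b^2 + 4*b*y₃ - y₃^2 + 4) <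
      Real.sqrt (4*a^2 + 4*a*y₃ - y₃^2 + 4) + 2*(b-a) := by
    rw [show Real.sqrt (4*a^2 + 4*a*y₃ - y₃^2 + 4) + 2*(b-a)
        = Real.sqrt ((Real.sqrt (4*a^2 + 4*a*y₃ - y₃^2 + 4) + 2*(b-a))^2) from
      (Real.sqrt_sq (by nlinarith)).symm]
    apply Real.sqrt_lt_sqrt hRb.le
    nlinarith
  simp only
  linarith
end

section
/- Define f(y) = -(3/2)y - (1/8)y³ + (1/8)√(272y² + 40y⁴ + y⁶ + 256) for y ∈ (0, √2). Then f attains a global minimum on (0, √2) at ỹ = (2/3)√(-51 + 6√79), and the minimum value is f(ỹ) = (8/9)√(-51 + 6√79). -/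
open Real Set

/-- f attains a global minimum on (0, √2) at ỹ = (2/3)√(-51 + 6√79),
with minimum value (8/9)√(-51 + 6√79). -/
theorem f_global_min :
    let f : ℝ → ℝ := fun y =>
      -(3/2)*y - (1/8)*y^3 + (1/8)*Real.sqrt (272*y^2 + 40*y^4 + y^6 + 256)
    let ytil : ℝ := (2/3) * Real.sqrt (-51 + 6 * Real.sqrt 79)
    ytil ∈ Set.Ioo 0 (Real.sqrt 2)
    ∧ (∀ y ∈ Set.Ioo (0:ℝ) (Real.sqrt 2), f ytil ≤ f y)
    ∧ f ytil = (8/9) * Real.sqrt (-51 + 6 * Real.sqrt 79) := by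
  intro f ytil
  set r : ℝ := Real.sqrt 79 with hrdef
  have hr : r ^ 2 = 79 := Real.sq_sqrt (by norm_num)
  have hr0 : 0 ≤ r := Real.sqrt_nonneg 79
  have hr8 : 8 ≤ r := by nlinarith
  have hr9 : r < 9.25 := by nlinarith
  have ht : (0:ℝ) < -51 + 6 * r := by nlinarith
  set s : ℝ := Real.sqrt (-51 + 6 * r) with hsdef
  have hs : s ^ 2 = -51 + 6 * r := Real.sq_sqrt ht.le
  have hs0 : 0 < s := Real.sqrt_pos.2 ht
  have hu : ytil = (2/3) * s := rfl
  -- value of f at ytil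
  have hval : f ytil = (8/9) * s := by
    have hPu : 272*((2/3)*s)^2 + 40*((2/3)*s)^4 + ((2/3)*s)^6 + 256
        = ((16/9) * s * r)^2 := by
      linear_combination (-4352/81 - 512/81*r + 832/243*s^2 + 128/243*s^2*r
        + 64/729*s^4) * hs + (-1024/27) * hr
    show -(3/2)*((2/3)*s) - (1/8)*((2/3)*s)^3
        + (1/8)*Real.sqrt (272*((2/3)*s)^2 + 40*((2/3)*s)^4 + ((2/3)*s)^6 + 256)
        = (8/9) * s
    rw [hPu, Real.sqrt_sq (by positivity)]
    linear_combination (-s/27) * hs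
  refine ⟨⟨by positivity, ?_⟩, ?_, hval⟩
  · -- ytil < √2
    rw [hu]
    have h2 : ((2/3)*s)^2 < 2 := by nlinarith
    exact (Real.lt_sqrt (by positivity)).2 h2
  · intro y hy
    obtain ⟨hy0, hy2⟩ := hy
    have key : 272*y^2 + 40*y^4 + y^6 + 256 - (y^3 + 12*y + (64/9)*s)^2
        = 16 * (y - (2/3)*s)^2 * (y^2 + (4/9)*s*y + (4/9)*(2*r+1)) := by
      linear_combination (-4352/81 - 512/81*r - 256/81*y*s + 64/27*y^2) * hs
        + (-1024/27) * hr
    have hQ : 0 ≤ y^3 + 12*y + (64/9)*s := by positivity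
    have hsq : (y^3 + 12*y + (64/9)*s)^2 ≤ 272*y^2 + 40*y^4 + y^6 + 256 := by
      nlinarith [sq_nonneg (y - (2/3)*s), sq_nonneg y, mul_pos hy0 hs0,
        mul_nonneg (sq_nonneg (y - (2/3)*s)) hy0.le]
    have hsqrt : y^3 + 12*y + (64/9)*s
        ≤ Real.sqrt (272*y^2 + 40*y^4 + y^6 + 256) :=
      Real.le_sqrt' (by positivity) |>.2 hsq
    rw [hval]
    show (8/9)*s ≤ -(3/2)*y - (1/8)*y^3
        + (1/8)*Real.sqrt (272*y^2 + 40*y^4 + y^6 + 256)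
    nlinarith [hsqrt]
end

section
/- The polynomial equation 2304 - 1024y² - 992y⁴ - 160y⁶ - 3y⁸ = 0 has exactly one positive real root, namely y = (2/3)√(-51 + 6√79) ≈ 1.017. -/
open Real

/-- The equation 2304 - 1024y² - 992y⁴ - 160y⁶ - 3y⁸ = 0 has exactly one positive
real root, namely y = (2/3)√(-51 + 6√79). -/
theorem unique_positive_root :
    let c : ℝ := (2/3) * Real.sqrt (-51 + 6 * Real.sqrt 79)
    (0 < c ∧ 2304 - 1024*c^2 - 992*c^4 - 160*c^6 - 3*c^8 = 0)
    ∧ ∀ y : ℝ, 0 < y → 2304 - 1024*y^2 - 992*y^4 - 160*y^6 - 3*y^8 = 0 → y = c := by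
  intro c
  have h79 : (Real.sqrt 79)^2 = 79 := Real.sq_sqrt (by norm_num)
  set s := Real.sqrt 79 with hsdef
  have hs0 : 0 ≤ s := Real.sqrt_nonneg 79
  have hsgt : s > 17/2 := by nlinarith
  have harg : (0:ℝ) < -51 + 6*s := by linarith
  have hc2 : c^2 = 4/9 * (-51 + 6*s) := by
    show ((2/3) * Real.sqrt (-51 + 6*s))^2 = _
    rw [mul_pow, Real.sq_sqrt harg.le]; ring
  have hcpos : 0 < c := by
    show (0:ℝ) < (2/3) * Real.sqrt (-51 + 6*s)
    have := Real.sqrt_pos.mpr harg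
    linarith
  -- the quadratic identity at u = (4/9)(-51+6s)
  have hq : 3*(4/9 * (-51 + 6*s))^2 + 136*(4/9 * (-51 + 6*s)) - 144 = 0 := by
    linear_combination (64/3) * h79
  have hfact : ∀ x : ℝ, 2304 - 1024*x^2 - 992*x^4 - 160*x^6 - 3*x^8
      = -((3*(x^2)^2 + 136*x^2 - 144)*(x^2+4)^2) := fun x => by ring
  have hceq : 2304 - 1024*c^2 - 992*c^4 - 160*c^6 - 3*c^8 = 0 := by
    rw [hfact, hc2]
    linear_combination (-((4/9 * (-51 + 6*s) + 4)^2)) * hq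
  refine ⟨⟨hcpos, hceq⟩, ?_⟩
  intro y hy hzero
  rw [hfact] at hzero
  have h4 : (0:ℝ) < (y^2+4)^2 := by positivity
  have hq2 : 3*(y^2)^2 + 136*y^2 - 144 = 0 := by
    rcases mul_eq_zero.mp (by linarith : (3*(y^2)^2 + 136*y^2 - 144)*(y^2+4)^2 = 0) with h | h
    · exact h
    · nlinarith
  -- hence y^2 = c^2
  have hupos : 0 < 4/9 * (-51 + 6*s) := by linarith
  have hy2 : y^2 = c^2 := by
    rw [hc2]
    have hfac : (y^2 - 4/9 * (-51 + 6*s)) * (3*y^2 + 3*(4/9 * (-51 + 6*s)) + 136) = 0 := by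
      linear_combination hq2 - hq
    rcases mul_eq_zero.mp hfac with h | h
    · linarith
    · nlinarith
  have : (y - c) * (y + c) = 0 := by linear_combination hy2
  rcases mul_eq_zero.mp this with h | h
  · linarith
  · linarith
end

section
/- With y₁* = (23/10)√2 - (1/90)√(444498 - 33120√2·√(-51 + 6√79) - 38400√79), y₂* = (8/9)√(-51 + 6√79), and y₃* the unique real root of y³ + 8y - 4√2, the quantity π - 2·arctan(y₁*/2) - 2·arctan(y₂*/2) - arctan((√2 + y₃*)/4) is strictly less than arctan(√2/4). -/
open Real

/-- With the lower bounds y₁*, y₂*, y₃* on the heights of the first three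
reflections, π - 2·arctan(y₁*/2) - 2·arctan(y₂*/2) - arctan((√2 + y₃*)/4)
is strictly less than φ₀ = arctan(√2/4). -/
theorem no_fourth_reflection_angle_bound
    (y₃star : ℝ) (h₃ : y₃star^3 + 8*y₃star - 4*Real.sqrt 2 = 0) :
    let y₁star : ℝ := (23/10)*Real.sqrt 2
      - (1/90)*Real.sqrt (444498 - 33120*Real.sqrt 2*Real.sqrt (-51 + 6*Real.sqrt 79)
          - 38400*Real.sqrt 79)
    let y₂star : ℝ := (8/9)*Real.sqrt (-51 + 6*Real.sqrt 79)
    π - 2*Real.arctan (y₁star/2) - 2*Real.arctan (y₂star/2)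
        - Real.arctan ((Real.sqrt 2 + y₃star)/4)
      < Real.arctan (Real.sqrt 2 / 4) := by
  intro y₁star y₂star
  -- numerical bounds on the square roots
  have hs2 : (141421/100000 : ℝ) ≤ Real.sqrt 2 :=
    (Real.le_sqrt (by norm_num) (by norm_num)).mpr (by norm_num)
  have h79 : (888819/100000 : ℝ) ≤ Real.sqrt 79 :=
    (Real.le_sqrt (by norm_num) (by norm_num)).mpr (by norm_num)
  have hEnn : (0:ℝ) ≤ -51 + 6*Real.sqrt 79 := by nlinarith [h79]
  have hE : (152615/100000 : ℝ) ≤ Real.sqrt (-51 + 6*Real.sqrt 79) :=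
    (Real.le_sqrt (by norm_num) hEnn).mpr (by nlinarith [h79])
  have hprod : (141421/100000 : ℝ) * (152615/100000)
      ≤ Real.sqrt 2 * Real.sqrt (-51 + 6*Real.sqrt 79) :=
    mul_le_mul hs2 hE (by norm_num) (Real.sqrt_nonneg 2)
  have hRsq : 444498 - 33120*Real.sqrt 2*Real.sqrt (-51 + 6*Real.sqrt 79)
      - 38400*Real.sqrt 79 ≤ (1780695/10000 : ℝ)^2 := by nlinarith [hprod, h79]
  have hR : Real.sqrt (444498 - 33120*Real.sqrt 2*Real.sqrt (-51 + 6*Real.sqrt 79)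
      - 38400*Real.sqrt 79) ≤ (1780695/10000 : ℝ) := by
    have := Real.sqrt_le_sqrt hRsq
    rwa [Real.sqrt_sq (by norm_num : (0:ℝ) ≤ (1780695/10000:ℝ))] at this
  -- lower bound on y₃*
  have hy3 : (66958/100000 : ℝ) ≤ y₃star := by
    by_contra h
    push_neg at h
    nlinarith [hs2, h₃, mul_pos (sub_pos.mpr h)
      (show (0:ℝ) < (66958/100000)^2 + (66958/100000)*y₃star + y₃star^2 + 8 by
        nlinarith [sq_nonneg (y₃star + 66958/200000)])]
  -- rational lower bounds on the arctangent arguments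
  have ha : (1274133/2000000 : ℝ) ≤ y₁star/2 := by
    show (1274133/2000000 : ℝ) ≤ ((23/10)*Real.sqrt 2 - (1/90)*Real.sqrt _)/2
    linarith [hs2, hR]
  have hb : (30523/45000 : ℝ) ≤ y₂star/2 := by
    show (30523/45000 : ℝ) ≤ ((8/9)*Real.sqrt (-51 + 6*Real.sqrt 79))/2
    linarith [hE]
  have hc : (208379/400000 : ℝ) ≤ (Real.sqrt 2 + y₃star)/4 := by
    linarith [hs2, hy3]
  have hd : (141421/400000 : ℝ) ≤ Real.sqrt 2 / 4 := by linarith [hs2]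
  -- arctan monotonicity
  have mA := Real.arctan_strictMono.monotone ha
  have mB := Real.arctan_strictMono.monotone hb
  have mC := Real.arctan_strictMono.monotone hc
  have mD := Real.arctan_strictMono.monotone hd
  -- combine the rational arctangents
  have h1 : Real.arctan (1274133/2000000) + Real.arctan (30523/45000)
      = Real.arctan (118381985000/51109638441) := by
    rw [Real.arctan_add (by norm_num)]
    congr 1
    norm_num
  have h2 : Real.arctan (208379/400000) + Real.arctan (141421/400000)
      = Real.arctan (139920000000/130530833441) := by
    rw [Real.arctan_add (by norm_num)]
    congr 1
    norm_num
  have h3 : Real.arctan (118381985000/51109638441) + Real.arctan (118381985000/51109638441)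
      = Real.arctan (-(12100920902555770770000/11402099230970480089519)) + π := by
    rw [Real.arctan_add_eq_add_pi (by norm_num) (by norm_num)]
    congr 2
    norm_num
  have h4 : Real.arctan (-(139920000000/130530833441 : ℝ))
      < Real.arctan (-(12100920902555770770000/11402099230970480089519 : ℝ)) :=
    Real.arctan_strictMono (by norm_num)
  rw [Real.arctan_neg, Real.arctan_neg] at h4
  rw [Real.arctan_neg] at h3
  linarith [mA, mB, mC, mD, h1, h2, h3, h4]
end

section
/- A body whose boundary consists of 42 congruent Double Parabola cavities, each of individual normalized resistance 1.49650, inscribed in a circle, has total normalized resistance (sin(π/42)/(π/42))·1.49650 ≈ 1.4951, and this value exceeds 1.49. -/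
/-!
The perimeter ratio `sin x / x` at `x = π / 42` lies in `(1 - x ^ 2 / 6, 1)` by the Taylor bounds
`x - x ^ 3 / 6 < sin x < x`; since `π < 4`, the defect `x ^ 2 / 6` is below `0.0016`, which is small
enough to keep `1.4965 · sin x / x` above `1.49`.
-/

open Real

namespace Real

lemma sin_div_self_lt_one {x : ℝ} (hx : 0 < x) : sin x / x < 1 :=
  (div_lt_one hx).2 (sin_lt hx)

lemma one_sub_sq_div_six_lt_sin_div_self {x : ℝ} (hx : 0 < x) : 1 - x ^ 2 / 6 < sin x / x := by
  rw [lt_div_iff₀ hx]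
  linarith [sin_gt_sub_cube hx]

end Real

/-- A body bounded by 42 Double Parabola cavities, each of normalized resistance
1.49650, has total normalized resistance (sin(π/42)/(π/42))·1.49650, which
exceeds 1.49 (and is below 1.4965). -/
theorem body_resistance_42_cavities :
    let R : ℝ := (Real.sin (π/42) / (π/42)) * 1.49650
    1.49 < R ∧ R < 1.4965 := by
  intro R
  have hx : 0 < π / 42 := by positivity
  have hx_small : π / 42 < 4 / 42 := by linarith [pi_lt_four]
  have lower := one_sub_sq_div_six_lt_sin_div_self hx
  have upper := sin_div_self_lt_one hx
  have hsq : (π / 42) ^ 2 < (4 / 42) ^ 2 := pow_lt_pow_left₀ hx_small hx.le two_ne_zero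
  constructor <;> simp only [R] <;> linarith
end
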